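/- Let S and W be closed subspaces of a Hilbert space H with cos(φ_{S,W⊥}) > 0, and let H₁ = S ⊕ W. If P_{SW} : H₁ → S is the oblique projection with range S and kernel W, then ‖P_{SW}‖ = 1/cos(φ_{S,W⊥}) and ‖f − P_S f‖ ≤ ‖f − P_{SW} f‖ ≤ (1/cos(φ_{S,W⊥})) ‖f − P_S f‖ for all f ∈ H₁. -/

import Mathlib

open Submodule

/-- `cos(φ_{SV}) = inf over unit vectors s ∈ S of ‖P_V s‖`. -/
noncomputable def cosAngle {H : Type*} [NormedAddCommGroup H] [InnerProductSpace ℝ H]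
    (S V : Submodule ℝ H) [CompleteSpace V] : ℝ :=
  sInf {r : ℝ | ∃ s ∈ S, ‖s‖ = 1 ∧ r = ‖(orthogonalProjection V s : H)‖}

/-!
Write `c = cos(φ_{S,W⊥})`. For `s ∈ S`, Pythagoras gives `‖P_W s‖² ≤ (1 - c²)‖s‖²`, hence
`⟪s, w⟫² ≤ (1 - c²)‖s‖²‖w‖²` for `w ∈ W`, and expanding `‖s + w‖²` yields both
`c‖s‖ ≤ ‖s + w‖` and `c‖w‖ ≤ ‖s + w‖`. The first bound is `‖P_{SW}‖ ≤ 1/c`. Conversely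
`P_{SW}` maps `P_{W⊥} t = t - P_W t` to `t`, so `1 ≤ ‖P_{SW}‖ ‖P_{W⊥} t‖` for unit vectors
`t ∈ S`, i.e. `1/‖P_{SW}‖ ≤ c`. Finally, for `f = s + w` we have `f - P_{SW} f = w`: the lower
error bound is the minimality of `P_S f`, and the upper one is the second bound applied to
`f - P_S f = (s - P_S f) + w`.
-/

open scoped InnerProductSpace

section General

variable {H : Type*} [NormedAddCommGroup H] [InnerProductSpace ℝ H]

lemma one_sub_mul_norm_sq_le_norm_add_sq {x y : H} {κ : ℝ} (hκ : 0 ≤ κ)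
    (h : ⟪x, y⟫_ℝ ^ 2 ≤ κ * ‖x‖ ^ 2 * ‖y‖ ^ 2) :
    (1 - κ) * ‖x‖ ^ 2 ≤ ‖x + y‖ ^ 2 := by
  have h2 : (2 * ⟪x, y⟫_ℝ) ^ 2 ≤ (κ * ‖x‖ ^ 2 + ‖y‖ ^ 2) ^ 2 := by
    nlinarith [sq_nonneg (κ * ‖x‖ ^ 2 - ‖y‖ ^ 2)]
  have hlower := (abs_le_of_sq_le_sq' h2 (by positivity)).1
  rw [norm_add_sq_real]
  linarith

lemma norm_sub_starProjection_le {U : Submodule ℝ H} [U.HasOrthogonalProjection] (y : H)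
    {u : H} (hu : u ∈ U) : ‖y - U.starProjection y‖ ≤ ‖y - u‖ := by
  rw [starProjection_minimal]
  exact ciInf_le ⟨0, by rintro _ ⟨x, rfl⟩; positivity⟩ (⟨u, hu⟩ : U)

end General

section CosAngle

variable {H : Type*} [NormedAddCommGroup H] [InnerProductSpace ℝ H]

lemma cosAngle_nonneg (S V : Submodule ℝ H) [CompleteSpace V] : 0 ≤ cosAngle S V :=
  Real.sInf_nonneg (by rintro _ ⟨s, -, -, rfl⟩; positivity)

lemma cosAngle_mul_norm_le {S V : Submodule ℝ H} [CompleteSpace V] {s : H} (hs : s ∈ S) :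
    cosAngle S V * ‖s‖ ≤ ‖V.starProjection s‖ := by
  rcases eq_or_ne s 0 with rfl | hs0
  · simp
  have hunit : cosAngle S V ≤ ‖V.starProjection (‖s‖⁻¹ • s)‖ :=
    csInf_le ⟨0, by rintro _ ⟨t, -, -, rfl⟩; positivity⟩
    ⟨‖s‖⁻¹ • s, S.smul_mem _ hs, norm_smul_inv_norm (𝕜 := ℝ) hs0, rfl⟩
  rw [← le_inv_mul_iff₀' (norm_pos_iff.2 hs0)]
  simpa [norm_smul] using hunit

lemma exists_norm_eq_one_of_cosAngle_ne_zero {S V : Submodule ℝ H} [CompleteSpace V]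
    (h : cosAngle S V ≠ 0) : ∃ s ∈ S, ‖s‖ = 1 := by
  by_contra hS
  refine h ?_
  have hempty : {r : ℝ | ∃ s ∈ S, ‖s‖ = 1 ∧ r = ‖(orthogonalProjection V s : H)‖} = ∅ :=
    Set.eq_empty_iff_forall_notMem.2 fun _ ⟨s, hs, hs1, _⟩ => hS ⟨s, hs, hs1⟩
  rw [cosAngle, hempty, Real.sInf_empty]

lemma cosAngle_le_one (S V : Submodule ℝ H) [CompleteSpace V] : cosAngle S V ≤ 1 := by
  by_cases hc : cosAngle S V = 0
  · rw [hc]; exact zero_le_one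
  obtain ⟨s, hs, hs1⟩ := exists_norm_eq_one_of_cosAngle_ne_zero hc
  calc cosAngle S V = cosAngle S V * ‖s‖ := by rw [hs1, mul_one]
    _ ≤ ‖V.starProjection s‖ := cosAngle_mul_norm_le hs
    _ ≤ 1 := hs1 ▸ V.norm_orthogonalProjectionOnto_apply_le s

variable [CompleteSpace H] {S W : Submodule ℝ H} [CompleteSpace W]

lemma real_inner_sq_le_of_mem {s w : H} (hs : s ∈ S) (hw : w ∈ W) :
    ⟪s, w⟫_ℝ ^ 2 ≤ (1 - cosAngle S Wᗮ ^ 2) * ‖s‖ ^ 2 * ‖w‖ ^ 2 := by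
  have hinner : ⟪s, w⟫_ℝ = ⟪W.starProjection s, w⟫_ℝ := by
    rw [inner_starProjection_left_eq_right, starProjection_eq_self_iff.2 hw]
  have hproj : ‖W.starProjection s‖ ^ 2 ≤ (1 - cosAngle S Wᗮ ^ 2) * ‖s‖ ^ 2 := by
    have hpyth := norm_sq_eq_add_norm_sq_starProjection s W
    have hcos := pow_le_pow_left₀ (by have := cosAngle_nonneg S Wᗮ; positivity)
      (cosAngle_mul_norm_le (V := Wᗮ) hs) 2
    rw [mul_pow] at hcos
    linarith
  calc ⟪s, w⟫_ℝ ^ 2 = |⟪W.starProjection s, w⟫_ℝ| ^ 2 := by rw [hinner, sq_abs]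
    _ ≤ (‖W.starProjection s‖ * ‖w‖) ^ 2 := by gcongr; exact abs_real_inner_le_norm _ _
    _ ≤ (1 - cosAngle S Wᗮ ^ 2) * ‖s‖ ^ 2 * ‖w‖ ^ 2 := by rw [mul_pow]; gcongr

lemma cosAngle_mul_norm_le_norm_add {s w : H} (hs : s ∈ S) (hw : w ∈ W) :
    cosAngle S Wᗮ * ‖s‖ ≤ ‖s + w‖ ∧ cosAngle S Wᗮ * ‖w‖ ≤ ‖s + w‖ := by
  have hκ : 0 ≤ 1 - cosAngle S Wᗮ ^ 2 := by
    nlinarith [cosAngle_nonneg S Wᗮ, cosAngle_le_one S Wᗮ]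
  have hinner := real_inner_sq_le_of_mem hs hw
  have hs' := one_sub_mul_norm_sq_le_norm_add_sq hκ hinner
  have hw' := one_sub_mul_norm_sq_le_norm_add_sq (x := w) (y := s) hκ
    (by rw [real_inner_comm]; linarith)
  rw [add_comm w, sub_sub_cancel] at hw'
  rw [sub_sub_cancel] at hs'
  have hroot : ∀ a : ℝ, 0 ≤ a → cosAngle S Wᗮ ^ 2 * a ^ 2 ≤ ‖s + w‖ ^ 2 →
      cosAngle S Wᗮ * a ≤ ‖s + w‖ := fun a ha h =>
    (pow_le_pow_iff_left₀ (mul_nonneg (cosAngle_nonneg S Wᗮ) ha) (norm_nonneg _)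
      two_ne_zero).1 (by rwa [mul_pow])
  exact ⟨hroot _ (norm_nonneg _) hs', hroot _ (norm_nonneg _) hw'⟩

end CosAngle

section ObliqueProjection

variable {H : Type*} [NormedAddCommGroup H] [InnerProductSpace ℝ H]

def IsObliqueProjection (S W : Submodule ℝ H) (P : (S ⊔ W : Submodule ℝ H) →L[ℝ] H) : Prop :=
  ∀ (x : (S ⊔ W : Submodule ℝ H)) (s w : H), s ∈ S → w ∈ W → (x : H) = s + w → P x = s

variable {S W : Submodule ℝ H} {P : (S ⊔ W : Submodule ℝ H) →L[ℝ] H}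

namespace IsObliqueProjection

variable [CompleteSpace W]

lemma norm_le_opNorm_mul (hP : IsObliqueProjection S W P) {t : H}
    (ht : t ∈ S) : ‖t‖ ≤ ‖P‖ * ‖Wᗮ.starProjection t‖ := by
  have hmem : Wᗮ.starProjection t ∈ S ⊔ W := by
    rw [starProjection_orthogonal_val]
    exact sub_mem (mem_sup_left ht) (mem_sup_right (W.starProjection_apply_mem t))
  have hPt : P ⟨_, hmem⟩ = t :=
    hP _ t _ ht (W.neg_mem (W.starProjection_apply_mem t)) (by simp [sub_eq_add_neg])
  have hle := P.le_opNorm ⟨_, hmem⟩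
  rwa [hPt] at hle

variable [CompleteSpace H]

lemma opNorm_le (hP : IsObliqueProjection S W P) (hcos : 0 < cosAngle S Wᗮ) :
    ‖P‖ ≤ 1 / cosAngle S Wᗮ := by
  refine P.opNorm_le_bound (by positivity) fun x => ?_
  obtain ⟨s, hs, w, hw, hx⟩ := mem_sup.1 x.2
  rw [hP x s w hs hw hx.symm, div_mul_eq_mul_div, le_div_iff₀' hcos, one_mul]
  simpa [← hx] using (cosAngle_mul_norm_le_norm_add hs hw).1

lemma one_div_cosAngle_le_opNorm (hP : IsObliqueProjection S W P)
    (hcos : 0 < cosAngle S Wᗮ) : 1 / cosAngle S Wᗮ ≤ ‖P‖ := by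
  obtain ⟨s₀, hs₀, hs₀1⟩ := exists_norm_eq_one_of_cosAngle_ne_zero hcos.ne'
  have hPpos : 0 < ‖P‖ := by
    have hle := hP.norm_le_opNorm_mul hs₀
    rw [hs₀1] at hle
    exact pos_of_mul_pos_left (zero_lt_one.trans_le hle) (norm_nonneg _)
  have hinv : ‖P‖⁻¹ ≤ cosAngle S Wᗮ := by
    refine le_csInf ⟨_, s₀, hs₀, hs₀1, rfl⟩ ?_
    rintro _ ⟨t, ht, ht1, rfl⟩
    rw [inv_le_iff_one_le_mul₀' hPpos, ← ht1]
    exact hP.norm_le_opNorm_mul ht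
  rwa [one_div, inv_le_comm₀ hcos hPpos]

lemma norm_sub_apply_le [CompleteSpace S] (hP : IsObliqueProjection S W P)
    (hcos : 0 < cosAngle S Wᗮ) (f : (S ⊔ W : Submodule ℝ H)) :
    ‖(f : H) - S.starProjection f‖ ≤ ‖(f : H) - P f‖ ∧
      ‖(f : H) - P f‖ ≤ 1 / cosAngle S Wᗮ * ‖(f : H) - S.starProjection f‖ := by
  obtain ⟨s, hs, w, hw, hf⟩ := mem_sup.1 f.2
  have hfs : (f : H) - s = w := by rw [← hf, add_sub_cancel_left]
  have hfw : (f : H) - P f = w := by rw [hP f s w hs hw hf.symm, hfs]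
  refine ⟨hfw ▸ hfs ▸ norm_sub_starProjection_le _ hs, ?_⟩
  have hdecomp : (f : H) - S.starProjection f = (s - S.starProjection f) + w := by
    rw [← hf]; abel
  have hbound := (cosAngle_mul_norm_le_norm_add
    (S.sub_mem hs (S.starProjection_apply_mem f)) hw).2
  rw [hfw, div_mul_eq_mul_div, le_div_iff₀' hcos, one_mul, hdecomp]
  exact hbound

end IsObliqueProjection

end ObliqueProjection

/-- If `cos(φ_{S,W⊥}) > 0` and `P_{SW} : H₁ = S ⊕ W → S` is the oblique projection with
range `S` and kernel `W` (`s + w ↦ s`), then `‖P_{SW}‖ = 1/cos(φ_{S,W⊥})` and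
`‖f − P_S f‖ ≤ ‖f − P_{SW} f‖ ≤ (1/cos(φ_{S,W⊥})) ‖f − P_S f‖` for `f ∈ H₁`. -/
theorem stmt6 {H : Type*} [NormedAddCommGroup H] [InnerProductSpace ℝ H] [CompleteSpace H]
    (S W : Submodule ℝ H) [CompleteSpace S] [CompleteSpace W]
    (hcos : 0 < cosAngle S Wᗮ)
    (P : (S ⊔ W : Submodule ℝ H) →L[ℝ] H)
    (hP : ∀ (x : (S ⊔ W : Submodule ℝ H)) (s w : H), s ∈ S → w ∈ W →
      (x : H) = s + w → P x = s) :
    ‖P‖ = 1 / cosAngle S Wᗮ ∧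
    ∀ f : (S ⊔ W : Submodule ℝ H),
      ‖(f : H) - (orthogonalProjection S (f : H) : H)‖ ≤ ‖(f : H) - P f‖ ∧
      ‖(f : H) - P f‖ ≤ (1 / cosAngle S Wᗮ) * ‖(f : H) - (orthogonalProjection S (f : H) : H)‖ := by
  have hP : IsObliqueProjection S W P := hP
  exact ⟨(hP.opNorm_le hcos).antisymm (hP.one_div_cosAngle_le_opNorm hcos),
    hP.norm_sub_apply_le hcos⟩
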